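/- Let η > 0, α > 2, χ > 0, and suppose sP χ^{-α} < 1 for s, P > 0. Then ∫_χ^∞ x e^{-ηx} (1 - 1/(1 + sPx^{-α})) dx = -Σ_{n=1}^∞ (-sP)^n η^{nα - 2} Γ(2 - nα, ηχ), where Γ(a, y) = ∫_y^∞ t^{a-1} e^{-t} dt is the upper incomplete gamma function, and the series converges absolutely. -/

import Mathlib

open MeasureTheory Real Set

/-- Upper incomplete gamma function `Γ(a, y) = ∫_y^∞ t^{a-1} e^{-t} dt`. -/
noncomputable def upperGamma (a y : ℝ) : ℝ := ∫ t in Set.Ioi y, t ^ (a - 1) * Real.exp (-t)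

lemma aux_integrable {η χ c : ℝ} (hη : 0 < η) (hχ : 0 < χ) (hc : c ≤ 0) :
    IntegrableOn (fun x : ℝ => x ^ c * Real.exp (-(η * x))) (Set.Ioi χ) := by
  have hbase : IntegrableOn (fun x : ℝ => χ ^ c * Real.exp (-η * x)) (Set.Ioi χ) :=
    (exp_neg_integrableOn_Ioi χ hη).const_mul _
  refine hbase.mono' ?_ ?_
  · apply Measurable.aestronglyMeasurable
    fun_prop
  · filter_upwards [ae_restrict_mem measurableSet_Ioi] with x hx
    have hx0 : 0 < x := hχ.trans hx
    have h1 : x ^ c ≤ χ ^ c := Real.rpow_le_rpow_of_nonpos hχ (le_of_lt hx) hc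
    have : |x ^ c * Real.exp (-(η * x))| = x ^ c * Real.exp (-(η * x)) := by
      apply abs_of_nonneg
      positivity
    rw [Real.norm_eq_abs, this, neg_mul]
    exact mul_le_mul_of_nonneg_right h1 (Real.exp_pos _).le

lemma aux_eq {η χ c : ℝ} (hη : 0 < η) (hχ : 0 < χ) :
    (∫ x in Set.Ioi χ, x ^ c * Real.exp (-(η * x)))
      = η ^ (-c - 1) * upperGamma (c + 1) (η * χ) := by
  have key := integral_comp_mul_left_Ioi (fun t => t ^ c * Real.exp (-t)) χ hη
  have h1 : (∫ x in Set.Ioi χ, (η * x) ^ c * Real.exp (-(η * x)))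
      = η ^ c * ∫ x in Set.Ioi χ, x ^ c * Real.exp (-(η * x)) := by
    rw [← integral_const_mul]
    refine setIntegral_congr_fun measurableSet_Ioi (fun x hx => ?_) 
    have hx0 : (0:ℝ) ≤ x := (hχ.trans hx).le
    rw [Real.mul_rpow hη.le hx0]; ring
  rw [h1] at key
  have hηc : η ^ c ≠ 0 := (Real.rpow_pos_of_pos hη c).ne'
  have : (∫ x in Set.Ioi χ, x ^ c * Real.exp (-(η * x)))
      = (η ^ c)⁻¹ * (η⁻¹ * ∫ t in Set.Ioi (η * χ), t ^ c * Real.exp (-t)) := by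
    rw [smul_eq_mul] at key
    rw [← key, ← mul_assoc, inv_mul_cancel₀ hηc, one_mul]
  rw [this, upperGamma]
  have h2 : (η ^ c)⁻¹ * η⁻¹ = η ^ (-c - 1) := by
    rw [← Real.rpow_neg_one η, ← Real.rpow_neg hη.le, ← Real.rpow_add hη]
    ring_nf
  have h3 : c + 1 - 1 = c := by ring
  rw [h3, ← mul_assoc, h2]


/-- Closed form of the same-layer LoS interference exponent:
`∫_χ^∞ x e^{-ηx}(1 - 1/(1+sPx^{-α})) dx
  = -Σ_{n≥1} (-sP)^n η^{nα-2} Γ(2-nα, ηχ)`, with absolute convergence. -/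
theorem stmt6 (η α χ s Pt : ℝ) (hη : 0 < η) (hα : 2 < α) (hχ : 0 < χ)
    (hs : 0 < s) (hPt : 0 < Pt) (hlt : s * Pt * χ ^ (-α) < 1) :
    (∫ x in Set.Ioi χ, x * Real.exp (-(η * x)) * (1 - (1 + s * Pt * x ^ (-α))⁻¹))
      = -∑' n : ℕ, (-(s * Pt)) ^ (n + 1) * η ^ (((n : ℝ) + 1) * α - 2)
          * upperGamma (2 - ((n : ℝ) + 1) * α) (η * χ)
    ∧ Summable (fun n : ℕ => ‖(-(s * Pt)) ^ (n + 1) * η ^ (((n : ℝ) + 1) * α - 2)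
          * upperGamma (2 - ((n : ℝ) + 1) * α) (η * χ)‖) := by
  set P : ℝ := s * Pt with hP
  have hP0 : 0 < P := mul_pos hs hPt
  set q : ℝ := P * χ ^ (-α) with hq
  have hq0 : 0 < q := mul_pos hP0 (Real.rpow_pos_of_pos hχ _)
  -- the summand functions
  set f : ℕ → ℝ → ℝ :=
    fun n x => -((-P) ^ (n + 1) * (x ^ (1 - ((n : ℝ) + 1) * α) * Real.exp (-(η * x)))) with hf
  have hcneg : ∀ n : ℕ, (1 : ℝ) - ((n : ℝ) + 1) * α ≤ 0 := by
    intro n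
    have h1 : (1 : ℝ) ≤ ((n : ℝ) + 1) := by
      have := Nat.cast_nonneg (α := ℝ) n; linarith
    nlinarith [Nat.cast_nonneg (α := ℝ) n]
  -- pointwise series expansion
  have key : ∀ x ∈ Set.Ioi χ,
      HasSum (fun n => f n x)
        (x * Real.exp (-(η * x)) * (1 - (1 + P * x ^ (-α))⁻¹)) := by
    intro x hx
    have hx0 : 0 < x := hχ.trans hx
    set u : ℝ := P * x ^ (-α) with hu
    have hu0 : 0 < u := mul_pos hP0 (Real.rpow_pos_of_pos hx0 _)
    have hule : u < 1 := by
      have : x ^ (-α) ≤ χ ^ (-α) :=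
        Real.rpow_le_rpow_of_nonpos hχ (le_of_lt hx) (by linarith)
      calc u ≤ q := mul_le_mul_of_nonneg_left this hP0.le
        _ < 1 := hlt
    have hgeo : HasSum (fun n : ℕ => (-u) ^ n) (1 + u)⁻¹ := by
      have := hasSum_geometric_of_norm_lt_one (ξ := -u)
        (by rw [norm_neg, Real.norm_eq_abs, abs_of_pos hu0]; exact hule)
      simpa [sub_neg_eq_add] using this
    have hmul := hgeo.mul_left (-(x * Real.exp (-(η * x))) * (-u))
    have hterm : ∀ n : ℕ,
        -(x * Real.exp (-(η * x))) * (-u) * (-u) ^ n = f n x := by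
      intro n
      have h1 : (-u) ^ (n + 1) = (-P) ^ (n + 1) * (x ^ (-α)) ^ (n + 1) := by
        rw [hu, show -(P * x ^ (-α)) = (-P) * x ^ (-α) by ring, mul_pow]
      have h2 : (x ^ (-α) : ℝ) ^ (n + 1) = x ^ (-(((n : ℝ) + 1) * α)) := by
        rw [← Real.rpow_natCast (x ^ (-α)) (n + 1), ← Real.rpow_mul hx0.le]
        push_cast
        ring_nf
      have h3 : x * x ^ (-(((n : ℝ) + 1) * α)) = x ^ (1 - ((n : ℝ) + 1) * α) := by
        nth_rewrite 1 [← Real.rpow_one x]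
        rw [← Real.rpow_add hx0]
        ring_nf
      calc -(x * Real.exp (-(η * x))) * (-u) * (-u) ^ n
          = -(x * Real.exp (-(η * x)) * (-u) ^ (n + 1)) := by ring
        _ = f n x := by
            rw [h1, h2, hf]
            simp only
            rw [← h3]
            ring
    have hval : -(x * Real.exp (-(η * x))) * (-u) * (1 + u)⁻¹
        = x * Real.exp (-(η * x)) * (1 - (1 + u)⁻¹) := by
      have h1u : (1 : ℝ) + u ≠ 0 := ne_of_gt (by positivity)
      field_simp
      ring
    rw [← hval]
    exact HasSum.congr_fun hmul (fun n => (hterm n).symm)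
  -- integrability of each term
  have hfint : ∀ n : ℕ, IntegrableOn (f n) (Set.Ioi χ) := by
    intro n
    exact (((aux_integrable hη hχ (hcneg n)).const_mul ((-P) ^ (n + 1))).neg)
  -- bound on norm-integrals
  set E : ℝ := ∫ x in Set.Ioi χ, Real.exp (-η * x) with hE
  have hE0 : 0 ≤ E := integral_nonneg fun x => (Real.exp_pos _).le
  have hnormbound : ∀ n : ℕ,
      (∫ x in Set.Ioi χ, ‖f n x‖) ≤ χ * E * q ^ (n + 1) := by
    intro n
    have hb : ∀ x ∈ Set.Ioi χ, ‖f n x‖ ≤ (χ * q ^ (n + 1)) * Real.exp (-η * x) := by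
      intro x hx
      have hx0 : 0 < x := hχ.trans hx
      have h1 : ‖f n x‖ = P ^ (n + 1) * (x ^ (1 - ((n : ℝ) + 1) * α) * Real.exp (-(η * x))) := by
        rw [hf]
        simp only [norm_neg, norm_mul, norm_pow, norm_neg,
          Real.norm_eq_abs, abs_of_pos hP0,
          abs_of_pos (Real.rpow_pos_of_pos hx0 _), abs_of_pos (Real.exp_pos _)]
      have h2 : x ^ (1 - ((n : ℝ) + 1) * α) ≤ χ ^ (1 - ((n : ℝ) + 1) * α) :=
        Real.rpow_le_rpow_of_nonpos hχ (le_of_lt hx) (hcneg n)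
      have h3 : χ ^ (1 - ((n : ℝ) + 1) * α) = χ * (χ ^ (-α)) ^ (n + 1) := by
        rw [← Real.rpow_natCast (χ ^ (-α)) (n + 1), ← Real.rpow_mul hχ.le]
        nth_rewrite 2 [← Real.rpow_one χ]
        rw [← Real.rpow_add hχ]
        push_cast
        ring_nf
      have h4 : P ^ (n + 1) * (χ ^ (-α)) ^ (n + 1) = q ^ (n + 1) := by
        rw [hq, ← mul_pow]
      rw [h1, neg_mul]
      calc P ^ (n + 1) * (x ^ (1 - ((n : ℝ) + 1) * α) * Real.exp (-(η * x)))
          ≤ P ^ (n + 1) * (χ ^ (1 - ((n : ℝ) + 1) * α) * Real.exp (-(η * x))) := by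
            apply mul_le_mul_of_nonneg_left _ (by positivity)
            exact mul_le_mul_of_nonneg_right h2 (Real.exp_pos _).le
        _ = (χ * q ^ (n + 1)) * Real.exp (-(η * x)) := by
            rw [h3, ← h4]; ring
    calc (∫ x in Set.Ioi χ, ‖f n x‖)
        ≤ ∫ x in Set.Ioi χ, (χ * q ^ (n + 1)) * Real.exp (-η * x) := by
          apply setIntegral_mono_on (hfint n).norm
            ((exp_neg_integrableOn_Ioi χ hη).const_mul _) measurableSet_Ioi hb
      _ = χ * E * q ^ (n + 1) := by
          rw [integral_const_mul]; ring
  have hnormsummable : Summable (fun n : ℕ => ∫ x in Set.Ioi χ, ‖f n x‖) := by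
    apply Summable.of_nonneg_of_le
      (fun n => integral_nonneg fun x => norm_nonneg _)
      hnormbound
    have : Summable (fun n : ℕ => q ^ (n + 1)) := by
      have hgs : Summable (fun n : ℕ => q ^ n) :=
        summable_geometric_of_lt_one hq0.le hlt
      simpa [pow_succ, mul_comm] using hgs.mul_right q
    exact this.mul_left _
  -- value of each integral
  have hintval : ∀ n : ℕ, (∫ x in Set.Ioi χ, f n x)
      = -((-P) ^ (n + 1) * η ^ (((n : ℝ) + 1) * α - 2)
          * upperGamma (2 - ((n : ℝ) + 1) * α) (η * χ)) := by
    intro n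
    have h1 : (∫ x in Set.Ioi χ, f n x)
        = -((-P) ^ (n + 1) * ∫ x in Set.Ioi χ,
            x ^ (1 - ((n : ℝ) + 1) * α) * Real.exp (-(η * x))) := by
      rw [hf]
      simp only
      rw [integral_neg, integral_const_mul]
    rw [h1, aux_eq hη hχ]
    have e1 : -(1 - ((n : ℝ) + 1) * α) - 1 = ((n : ℝ) + 1) * α - 2 := by ring
    have e2 : 1 - ((n : ℝ) + 1) * α + 1 = 2 - ((n : ℝ) + 1) * α := by ring
    rw [e1, e2, mul_assoc]
  -- swap sum and integral
  have hswap := MeasureTheory.integral_tsum_of_summable_integral_norm hfint hnormsummable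
  have hcong : (∫ x in Set.Ioi χ, x * Real.exp (-(η * x)) * (1 - (1 + P * x ^ (-α))⁻¹))
      = ∫ x in Set.Ioi χ, ∑' n, f n x := by
    refine setIntegral_congr_fun measurableSet_Ioi (fun x hx => ?_)
    exact ((key x hx).tsum_eq).symm
  constructor
  · rw [hcong, ← hswap]
    rw [← tsum_neg]
    congr 1
    funext n
    rw [hintval n]
  · apply Summable.of_nonneg_of_le (fun n => norm_nonneg _) _ hnormsummable
    intro n
    have : (-(s * Pt)) ^ (n + 1) * η ^ (((n : ℝ) + 1) * α - 2)
          * upperGamma (2 - ((n : ℝ) + 1) * α) (η * χ)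
        = -(∫ x in Set.Ioi χ, f n x) := by rw [hintval n, neg_neg]
    rw [this, norm_neg]
    exact norm_integral_le_integral_norm _
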